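/- arXiv:2002.09932 — 2 statements merged into one kernel-verified Lean document; each statement's English description precedes it below -/
import Mathlib

section
/- Let m ≥ 0 and n ≥ 0. In the poset Av_𝐦(n) of 𝐦-avalanches of size n: (a) the componentwise minimum of two 𝐦-avalanches of size n is again an 𝐦-avalanche, and it is the meet of the two elements in Av_𝐦(n); (b) for u, v ∈ Av_𝐦(n), v covers u in Av_𝐦(n) if and only if u ≼ v and ω(v) = ω(u) + 1, where ω(w) denotes the sum of the letters of w; in particular every covering pair differs in exactly one letter, by 1, and Av_𝐦(n) is a graded poset with rank function ω. -/
/-- Componentwise order on words of natural numbers of the same length. -/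
def wle (u v : List ℕ) : Prop := List.Forall₂ (· ≤ ·) u v

/-- Strict componentwise order. -/
def wlt (u v : List ℕ) : Prop := wle u v ∧ u ≠ v

/-- `u` is a `δ`-cliff: the letter at (0-indexed) position `i` is at most `δ i`.
(The range map is 0-indexed: `δ i` is the bound of the `(i+1)`-st letter.) -/
def IsCliff (δ : ℕ → ℕ) (u : List ℕ) : Prop := ∀ i < u.length, u.getD i 0 ≤ δ i

def ClosedByPrefix (S : Set (List ℕ)) : Prop := ∀ u v : List ℕ, u ++ v ∈ S → u ∈ S

def MinExtendable (S : Set (List ℕ)) : Prop := [] ∈ S ∧ ∀ u ∈ S, u ++ [0] ∈ S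

def MaxExtendable (δ : ℕ → ℕ) (S : Set (List ℕ)) : Prop :=
  [] ∈ S ∧ ∀ u ∈ S, u ++ [δ u.length] ∈ S

/-- `v` covers `u` in the subposet `S` (componentwise order on words of equal length). -/
def CoversIn (S : Set (List ℕ)) (u v : List ℕ) : Prop :=
  u ∈ S ∧ v ∈ S ∧ wlt u v ∧ ¬ ∃ w ∈ S, wlt u w ∧ wlt w v

/-- Auxiliary for the decrementation map: input is the reversed word. -/
noncomputable def decrAux (S : Set (List ℕ)) : List ℕ → List ℕ
  | [] => []
  | a :: r => decrAux S r ++ [sSup {b | b ≤ a ∧ decrAux S r ++ [b] ∈ S}]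

/-- The `S`-decrementation map. -/
noncomputable def decr (S : Set (List ℕ)) (u : List ℕ) : List ℕ := decrAux S u.reverse

/-- Auxiliary for the incrementation map: input is the reversed word. -/
noncomputable def incrAux (δ : ℕ → ℕ) (S : Set (List ℕ)) : List ℕ → List ℕ
  | [] => []
  | a :: r => incrAux δ S r ++
      [sInf {b | a ≤ b ∧ b ≤ δ r.length ∧ incrAux δ S r ++ [b] ∈ S}]

/-- The `S`-incrementation map. -/
noncomputable def incr (δ : ℕ → ℕ) (S : Set (List ℕ)) (u : List ℕ) : List ℕ :=
  incrAux δ S u.reverse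

/-- The `S`-elevation map. -/
noncomputable def elev (S : Set (List ℕ)) (u : List ℕ) : List ℕ :=
  (List.range u.length).map fun i =>
    Set.ncard {a : ℕ | a < u.getD i 0 ∧ u.take i ++ [a] ∈ S}

/-- A `δ`-hill: a weakly increasing `δ`-cliff. -/
def IsHill (δ : ℕ → ℕ) (u : List ℕ) : Prop :=
  IsCliff δ u ∧ List.Pairwise (· ≤ ·) u

/-- A `δ`-avalanche: a `δ`-cliff whose nonempty prefixes have small sums. -/
def IsAval (δ : ℕ → ℕ) (u : List ℕ) : Prop :=
  IsCliff δ u ∧ ∀ k < u.length, (u.take (k + 1)).sum ≤ δ k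

/-- A `δ`-canyon. -/
def IsCanyon (δ : ℕ → ℕ) (u : List ℕ) : Prop :=
  IsCliff δ u ∧ ∀ i < u.length, ∀ j, 1 ≤ j → j ≤ u.getD i 0 → j ≤ i →
    u.getD (i - j) 0 + j ≤ u.getD i 0

/-- The `δ`-reduction map. -/
def reduce (δ : ℕ → ℕ) (u : List ℕ) : List ℕ :=
  (List.range u.length).map fun i => min (u.getD i 0) (δ i)

/-- `δ` is valley-free. -/
def ValleyFree (δ : ℕ → ℕ) : Prop :=
  ¬ ∃ i₁ i₂ i₃ : ℕ, i₁ < i₂ ∧ i₂ < i₃ ∧ δ i₂ < δ i₁ ∧ δ i₂ < δ i₃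

lemma wle_iff {u v : List ℕ} :
    wle u v ↔ u.length = v.length ∧ ∀ i < u.length, u.getD i 0 ≤ v.getD i 0 := by
  induction u generalizing v with
  | nil => cases v <;> simp [wle]
  | cons a t ih =>
    cases v with
    | nil => simp [wle]
    | cons b s =>
      rw [wle, List.forall₂_cons]
      constructor
      · rintro ⟨hab, ht⟩
        obtain ⟨hl, hp⟩ := ih.mp ht
        refine ⟨by simpa using hl, ?_⟩
        intro i hi
        cases i with
        | zero => simpa using hab
        | succ j => simpa using hp j (by simpa using hi)
      · rintro ⟨hl, hp⟩
        refine ⟨by simpa using hp 0 (by simp), ih.mpr ⟨by simpa using hl, ?_⟩⟩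
        intro j hj
        simpa using hp (j+1) (by simpa using hj)

lemma wle_sum_le {u v : List ℕ} (h : wle u v) : u.sum ≤ v.sum := by
  induction h with
  | nil => simp
  | cons hab _ ih => simpa using Nat.add_le_add hab ih

lemma wle_sum_lt {u v : List ℕ} (h : wle u v) (hne : u ≠ v) : u.sum < v.sum := by
  induction h with
  | nil => simp at hne
  | @cons a b t s hab ht ih =>
    rcases eq_or_lt_of_le hab with rfl | h'
    · have hts : t ≠ s := by rintro rfl; exact hne rfl
      simpa using Nat.add_lt_add_left (ih hts) a
    · simpa using Nat.add_lt_add_of_lt_of_le h' (wle_sum_le ht)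

lemma wle_take {u v : List ℕ} (h : wle u v) (t : ℕ) : wle (u.take t) (v.take t) := by
  induction h generalizing t with
  | nil => simp [wle]
  | cons hab _ ih =>
    cases t with
    | zero => simp [wle]
    | succ s => exact List.Forall₂.cons hab (ih s)

lemma exists_lt_index {u v : List ℕ} (h : wle u v) (hne : u ≠ v) :
    ∃ i < u.length, u.getD i 0 < v.getD i 0 := by
  induction h with
  | nil => simp at hne
  | @cons a b t s hab ht ih =>
    rcases eq_or_lt_of_le hab with rfl | h'
    · have hts : t ≠ s := by rintro rfl; exact hne rfl
      obtain ⟨i, hi, hlt⟩ := ih hts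
      exact ⟨i + 1, by simpa using hi, by simpa using hlt⟩
    · exact ⟨0, by simp, by simpa using h'⟩

lemma wle_zipWith_min_left : ∀ u v : List ℕ, u.length = v.length →
    wle (List.zipWith min u v) u
  | [], [], _ => by simp [wle]
  | a :: t, b :: s, h => by
    exact List.Forall₂.cons (min_le_left a b) (wle_zipWith_min_left t s (by simpa using h))

lemma wle_zipWith_min {w u v : List ℕ} (h1 : wle w u) (h2 : wle w v) :
    wle w (List.zipWith min u v) := by
  induction h1 generalizing v with
  | nil => cases h2; simp [wle]
  | @cons a b t s hab _ ih =>
    cases h2 with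
    | cons hac h2t => exact List.Forall₂.cons (le_min hab hac) (ih h2t)

lemma sum_zipWith_min_le_left : ∀ u v : List ℕ, (List.zipWith min u v).sum ≤ u.sum
  | [], _ => by simp
  | _ :: _, [] => by simp
  | a :: t, b :: s => by
    simpa using Nat.add_le_add (min_le_left a b) (sum_zipWith_min_le_left t s)

lemma getD_take' {u : List ℕ} {t i : ℕ} (h : i < t) (hi : i < u.length) :
    (u.take t).getD i 0 = u.getD i 0 := by
  rw [List.getD_eq_getElem _ _ (by simp [Nat.lt_min]; omega),
    List.getD_eq_getElem _ _ hi, List.getElem_take]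

lemma sum_take_set (u : List ℕ) (i : ℕ) (hi : i < u.length) : ∀ t : ℕ,
    ((u.set i (u.getD i 0 + 1)).take t).sum = (u.take t).sum + (if i < t then 1 else 0) := by
  induction u generalizing i with
  | nil => simp at hi
  | cons a l ih =>
    intro t
    cases i with
    | zero =>
      cases t with
      | zero => simp
      | succ s => simp; omega
    | succ j =>
      cases t with
      | zero => simp
      | succ s =>
        have := ih j (by simpa using hi) s
        simp only [List.getD_cons_succ, List.set_cons_succ, List.take_succ_cons,
          List.sum_cons, this]
        by_cases hjs : j < s <;> simp [hjs, Nat.succ_lt_succ_iff] <;> omega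

lemma sum_eq_add_diff {u v : List ℕ} (h : wle u v) :
    v.sum = u.sum + (List.zipWith (fun a b => b - a) u v).sum := by
  induction h with
  | nil => simp
  | cons hab _ ih =>
    simp only [List.zipWith_cons_cons, List.sum_cons, ih]
    omega

lemma sum_eq_one_unique {l : List ℕ} (h : l.sum = 1) :
    ∃ i < l.length, l.getD i 0 = 1 ∧ ∀ j < l.length, j ≠ i → l.getD j 0 = 0 := by
  induction l with
  | nil => simp at h
  | cons a t ih =>
    simp only [List.sum_cons] at h
    by_cases ha : a = 0
    · subst ha
      obtain ⟨i, hi, h1, h0⟩ := ih (by omega)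
      refine ⟨i + 1, by simpa using hi, by simpa using h1, ?_⟩
      intro j hj hne
      cases j with
      | zero => simp
      | succ k => simpa using h0 k (by simpa using hj) (by omega)
    · have ha1 : a = 1 := by omega
      have hts : t.sum = 0 := by omega
      refine ⟨0, by simp, by simp [ha1], ?_⟩
      intro j hj hne
      cases j with
      | zero => omega
      | succ k =>
        have hk : k < t.length := by simpa using hj
        have : t.getD k 0 ∈ t := by
          rw [List.getD_eq_getElem _ _ hk]; exact List.getElem_mem hk
        simpa using List.sum_eq_zero_iff.mp hts _ this

lemma wle_zipWith_min_right : ∀ u v : List ℕ, u.length = v.length →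
    wle (List.zipWith min u v) v
  | [], [], _ => by simp [wle]
  | a :: t, b :: s, h => by
    exact List.Forall₂.cons (min_le_right a b) (wle_zipWith_min_right t s (by simpa using h))

lemma aval_set_step {m : ℕ} {u v : List ℕ}
    (hu : IsAval (fun i => m * i) u) (hv : IsAval (fun i => m * i) v)
    (hlen : u.length = v.length) (hle : wle u v)
    {i : ℕ} (hi : i < u.length) (hlt : u.getD i 0 < v.getD i 0) :
    IsAval (fun i => m * i) (u.set i (u.getD i 0 + 1)) ∧
    (u.set i (u.getD i 0 + 1)).length = u.length ∧
    wle u (u.set i (u.getD i 0 + 1)) ∧ u ≠ u.set i (u.getD i 0 + 1) ∧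
    wle (u.set i (u.getD i 0 + 1)) v ∧
    (u.set i (u.getD i 0 + 1)).sum = u.sum + 1 := by
  set w := u.set i (u.getD i 0 + 1) with hw
  have hwlen : w.length = u.length := by simp [hw]
  have hgd : ∀ j, j ≠ i → w.getD j 0 = u.getD j 0 := by
    intro j hj
    by_cases hjl : j < u.length
    · rw [List.getD_eq_getElem _ _ (by rw [hwlen]; exact hjl),
        List.getD_eq_getElem _ _ hjl]
      simp [hw, List.getElem_set_ne (Ne.symm hj)]
    · rw [List.getD_eq_default, List.getD_eq_default] <;> omega
  have hgi : w.getD i 0 = u.getD i 0 + 1 := by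
    rw [List.getD_eq_getElem _ _ (by rw [hwlen]; exact hi)]
    simp [hw]
  have hple := wle_iff.mp hle
  have hsum : w.sum = u.sum + 1 := by
    have h1 := sum_take_set u i hi u.length
    rw [if_pos hi, List.take_of_length_le (le_of_eq hwlen), List.take_length] at h1
    exact h1
  have hwav : IsAval (fun i => m * i) w := by
    constructor
    · intro j hj
      rw [hwlen] at hj
      rcases eq_or_ne j i with rfl | hne
      · rw [hgi]
        have := hv.1 j (by omega)
        omega
      · rw [hgd j hne]; exact hu.1 j hj
    · intro k hk
      rw [hwlen] at hk
      have hst := sum_take_set u i hi (k + 1)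
      by_cases hik : i < k + 1
      · rw [if_pos hik] at hst
        have h2 : wle (u.take (k+1)) (v.take (k+1)) := wle_take hle (k+1)
        have hne : u.take (k+1) ≠ v.take (k+1) := by
          intro he
          have hx : (List.take (k+1) u).getD i 0 = (List.take (k+1) v).getD i 0 := by
            rw [he]
          rw [getD_take' hik hi, getD_take' hik (by omega)] at hx
          omega
        have h3 := wle_sum_lt h2 hne
        have h4 := hv.2 k (by omega)
        rw [hst]
        omega
      · rw [if_neg hik] at hst
        rw [hst]
        simpa using hu.2 k hk
  refine ⟨hwav, hwlen, ?_, ?_, ?_, hsum⟩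
  · refine wle_iff.mpr ⟨hwlen.symm, fun j hj => ?_⟩
    rcases eq_or_ne j i with rfl | hne
    · rw [hgi]; omega
    · rw [hgd j hne]
  · intro he
    have : u.getD i 0 = u.getD i 0 + 1 := by conv_lhs => rw [he, hgi]
    omega
  · refine wle_iff.mpr ⟨by rw [hwlen, hlen], fun j hj => ?_⟩
    rw [hwlen] at hj
    rcases eq_or_ne j i with rfl | hne
    · rw [hgi]; omega
    · rw [hgd j hne]; exact hple.2 j hj

/-- In the poset `Av_𝐦(n)` of `𝐦`-avalanches of size `n`
(where `𝐦(i) = m·(i-1)`, i.e. 0-indexed bound `m * i`):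
(a) the componentwise minimum of two avalanches is an avalanche and is their meet;
(b) `v` covers `u` iff `u ≼ v` and `ω(v) = ω(u) + 1`; in particular a covering pair
differs in exactly one letter, by `1` (so `Av_𝐦(n)` is graded with rank function `ω`). -/
theorem stmt4 (m n : ℕ) (u v : List ℕ)
    (hu : IsAval (fun i => m * i) u) (hv : IsAval (fun i => m * i) v)
    (hun : u.length = n) (hvn : v.length = n) :
    (IsAval (fun i => m * i) (List.zipWith min u v) ∧
      wle (List.zipWith min u v) u ∧ wle (List.zipWith min u v) v ∧
      ∀ w, IsAval (fun i => m * i) w → wle w u → wle w v →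
        wle w (List.zipWith min u v)) ∧
    (CoversIn {w | IsAval (fun i => m * i) w ∧ w.length = n} u v ↔
      wle u v ∧ v.sum = u.sum + 1) ∧
    (CoversIn {w | IsAval (fun i => m * i) w ∧ w.length = n} u v →
      ∃ i < n, v.getD i 0 = u.getD i 0 + 1 ∧
        ∀ j < n, j ≠ i → v.getD j 0 = u.getD j 0) := by
  have hluv : u.length = v.length := by rw [hun, hvn]
  have key : CoversIn {w | IsAval (fun i => m * i) w ∧ w.length = n} u v ↔
      wle u v ∧ v.sum = u.sum + 1 := by
    constructor
    · rintro ⟨huS, hvS, ⟨hle, hne⟩, hnex⟩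
      refine ⟨hle, ?_⟩
      obtain ⟨i, hi, hlt⟩ := exists_lt_index hle hne
      obtain ⟨hwav, hwlen, hulew, hunew, hwlev, hwsum⟩ :=
        aval_set_step hu hv hluv hle hi hlt
      by_cases hwv : u.set i (u.getD i 0 + 1) = v
      · rw [← hwv, hwsum]
      · exact absurd ⟨_, ⟨hwav, by rw [hwlen, hun]⟩, ⟨hulew, hunew⟩, hwlev, hwv⟩ hnex
    · rintro ⟨hle, hsum⟩
      refine ⟨⟨hu, hun⟩, ⟨hv, hvn⟩, ⟨hle, fun he => by rw [he] at hsum; omega⟩, ?_⟩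
      rintro ⟨w, hwS, ⟨h1, h1n⟩, h2, h2n⟩
      have hs1 := wle_sum_lt h1 h1n
      have hs2 := wle_sum_lt h2 h2n
      omega
  refine ⟨⟨⟨?_, ?_⟩, wle_zipWith_min_left u v hluv, wle_zipWith_min_right u v hluv,
      fun w _ h1 h2 => wle_zipWith_min h1 h2⟩, key, ?_⟩
  · intro i hi
    simp only [List.length_zipWith, lt_min_iff] at hi
    rw [List.getD_eq_getElem _ _ (by simp [List.length_zipWith]; omega),
      List.getElem_zipWith]
    calc min (u[i]'hi.1) (v[i]'hi.2) ≤ u[i]'hi.1 := min_le_left _ _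
      _ = u.getD i 0 := (List.getD_eq_getElem _ _ hi.1).symm
      _ ≤ m * i := hu.1 i hi.1
  · intro k hk
    simp only [List.length_zipWith, lt_min_iff] at hk
    rw [List.take_zipWith]
    calc (List.zipWith min (u.take (k+1)) (v.take (k+1))).sum
        ≤ (u.take (k+1)).sum := sum_zipWith_min_le_left _ _
      _ ≤ m * k := hu.2 k hk.1
  · intro hcov
    obtain ⟨hle, hsum⟩ := key.mp hcov
    have hd := sum_eq_add_diff hle
    set d := List.zipWith (fun a b => b - a) u v with hdd
    have hdsum : d.sum = 1 := by omega
    have hdlen : d.length = n := by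
      simp [hdd, List.length_zipWith, hun, hvn]
    obtain ⟨i, hi, h1, h0⟩ := sum_eq_one_unique hdsum
    rw [hdlen] at hi
    have hgd : ∀ j < n, d.getD j 0 = v.getD j 0 - u.getD j 0 := by
      intro j hj
      rw [List.getD_eq_getElem _ _ (by rw [hdlen]; exact hj)]
      simp only [hdd, List.getElem_zipWith]
      rw [List.getD_eq_getElem _ _ (show j < v.length by rw [hvn]; exact hj),
        List.getD_eq_getElem _ _ (show j < u.length by rw [hun]; exact hj)]
    have hple := wle_iff.mp hle
    refine ⟨i, hi, ?_, ?_⟩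
    · have e1 := hgd i hi
      have e2 := hple.2 i (by rw [hun]; exact hi)
      omega
    · intro j hj hne
      have e1 := h0 j (by rw [hdlen]; exact hj) hne
      have e2 := hgd j hj
      have e3 := hple.2 j (by rw [hun]; exact hj)
      omega
end

section
/- Let m ≥ 1 and n ≥ 1. (a) An element u of Ca_𝐦(n) covers exactly n−1 elements in the poset Ca_𝐦(n) if and only if u_i < u_{i+1} for all i ∈ [n−1] (these are the input-wings of Ca_𝐦(n)). (b) An element u of Ca_𝐦(n) both covers exactly n−1 elements and is covered by exactly n−1 elements in Ca_𝐦(n) if and only if 1 ≤ u_i < m(i−1) for all i ∈ [2,n] and u_i − u_{i−1} ≥ 2 for all i ∈ [3,n] (these are the butterflies of Ca_𝐦(n)). Here n−1 = #{i ∈ [n] : 𝐦(i) ≠ 0}. -/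
lemma getD_set_self (u : List ℕ) (i b : ℕ) (h : i < u.length) :
    (u.set i b).getD i 0 = b := by
  rw [List.getD_eq_getElem _ _ (by simpa using h)]
  simp [List.getElem_set]

lemma getD_set_ne (u : List ℕ) (i b k : ℕ) (h : k ≠ i) :
    (u.set i b).getD k 0 = u.getD k 0 := by
  by_cases hk : k < u.length
  · rw [List.getD_eq_getElem _ _ (by simpa using hk), List.getD_eq_getElem _ _ hk]
    simp [List.getElem_set, h.symm]
  · rw [List.getD_eq_default _ _ (by simpa using not_lt.mp hk),
      List.getD_eq_default _ _ (not_lt.mp hk)]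

lemma wle_iff_getD {u v : List ℕ} (h : u.length = v.length) :
    wle u v ↔ ∀ k < u.length, u.getD k 0 ≤ v.getD k 0 := by
  rw [wle, List.forall₂_iff_get]
  constructor
  · rintro ⟨_, H⟩ k hk
    rw [List.getD_eq_getElem _ _ hk, List.getD_eq_getElem _ _ (h ▸ hk)]
    simpa using H k hk (h ▸ hk)
  · intro H
    refine ⟨h, fun i h1 h2 => ?_⟩
    have := H i h1
    rw [List.getD_eq_getElem _ _ h1, List.getD_eq_getElem _ _ h2] at this
    simpa using this

lemma wle_length {u v : List ℕ} (h : wle u v) : u.length = v.length :=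
  List.Forall₂.length_eq h

lemma list_ext_getD {u v : List ℕ} (h : u.length = v.length)
    (H : ∀ k < u.length, u.getD k 0 = v.getD k 0) : u = v := by
  refine List.ext_getElem h fun k h1 h2 => ?_
  have := H k h1
  rwa [List.getD_eq_getElem _ _ h1, List.getD_eq_getElem _ _ h2] at this

lemma ne_of_getD_ne {u v : List ℕ} {k : ℕ} (h : u.getD k 0 ≠ v.getD k 0) : u ≠ v :=
  fun he => h (by rw [he])

lemma canyon_set_between (δ : ℕ → ℕ) {x y : List ℕ} (hx : IsCanyon δ x) (hy : IsCanyon δ y)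
    (hlen : x.length = y.length)
    (hle : ∀ k < x.length, x.getD k 0 ≤ y.getD k 0)
    {i : ℕ} (hi : i < x.length)
    (heq : ∀ k, i < k → k < x.length → x.getD k 0 = y.getD k 0) :
    IsCanyon δ (x.set i (y.getD i 0)) := by
  set w := x.set i (y.getD i 0) with hw
  have hwlen : w.length = x.length := List.length_set
  have hwk : ∀ k, k ≠ i → w.getD k 0 = x.getD k 0 := fun k hk => getD_set_ne x _ _ k hk
  have hwi : w.getD i 0 = y.getD i 0 := getD_set_self x i _ hi
  have hwle : ∀ k < x.length, w.getD k 0 ≤ y.getD k 0 := by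
    intro k hk; by_cases h : k = i
    · subst h; rw [hwi]
    · rw [hwk k h]; exact hle k hk
  constructor
  · intro k hk
    rw [hwlen] at hk
    by_cases h : k = i
    · subst h; rw [hwi]; exact hy.1 _ (hlen ▸ hk)
    · rw [hwk k h]; exact hx.1 k hk
  · intro k hk j hj1 hj2 hj3
    rw [hwlen] at hk
    rcases lt_trichotomy k i with h | h | h
    · rw [hwk k (ne_of_lt h)] at hj2 ⊢
      rw [hwk (k - j) (by omega)]
      exact hx.2 k hk j hj1 hj2 hj3
    · subst h
      rw [hwi] at hj2 ⊢
      have h1 : w.getD (k - j) 0 ≤ y.getD (k - j) 0 := hwle _ (by omega)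
      have h2 := hy.2 k (hlen ▸ hk) j hj1 hj2 hj3
      omega
    · have hky : w.getD k 0 = y.getD k 0 := by rw [hwk k (by omega)]; exact heq k h hk
      rw [hky] at hj2 ⊢
      have h1 : w.getD (k - j) 0 ≤ y.getD (k - j) 0 := hwle _ (by omega)
      have h2 := hy.2 k (hlen ▸ hk) j hj1 hj2 hj3
      omega

lemma canyon_set_zero (δ : ℕ → ℕ) {x : List ℕ} (hx : IsCanyon δ x) (i : ℕ) :
    IsCanyon δ (x.set i 0) := by
  set w := x.set i 0 with hw
  have hwlen : w.length = x.length := List.length_set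
  have hwk : ∀ k, k ≠ i → w.getD k 0 = x.getD k 0 := fun k hk => getD_set_ne x _ _ k hk
  constructor
  · intro k hk
    rw [hwlen] at hk
    by_cases h : k = i
    · subst h
      by_cases h2 : k < x.length
      · rw [getD_set_self x k _ h2]; exact Nat.zero_le _
      · omega
    · rw [hwk k h]; exact hx.1 k hk
  · intro k hk j hj1 hj2 hj3
    rw [hwlen] at hk
    by_cases h : k = i
    · subst h
      rw [getD_set_self x k _ hk] at hj2; omega
    · rw [hwk k h] at hj2 ⊢
      have h2 := hx.2 k hk j hj1 hj2 hj3
      by_cases h3 : k - j = i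
      · rw [h3, getD_set_self x i _ (by omega)]; omega
      · rw [hwk _ h3]; omega

lemma covers_single_diff (δ : ℕ → ℕ) (n : ℕ) {x y : List ℕ}
    (h : CoversIn {w | IsCanyon δ w ∧ w.length = n} x y) :
    ∃ i < n, x.getD i 0 < y.getD i 0 ∧ ∀ k, k ≠ i → x.getD k 0 = y.getD k 0 := by
  classical
  obtain ⟨⟨hxc, hxl⟩, ⟨hyc, hyl⟩, ⟨hxy, hne⟩, hno⟩ := h
  have hlen : x.length = y.length := hxl.trans hyl.symm
  have hle : ∀ k < x.length, x.getD k 0 ≤ y.getD k 0 := (wle_iff_getD hlen).mp hxy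
  set D : Finset ℕ := (Finset.range n).filter (fun k => x.getD k 0 ≠ y.getD k 0) with hD
  have hDne : D.Nonempty := by
    by_contra hemp
    apply hne
    refine list_ext_getD hlen fun k hk => ?_
    by_contra hkne
    exact hemp ⟨k, by rw [hD, Finset.mem_filter, Finset.mem_range]; exact ⟨hxl ▸ hk, hkne⟩⟩
  set i : ℕ := D.max' hDne with hi
  have hiD : i ∈ D := D.max'_mem hDne
  have hin : i < n := by
    have := hiD; rw [hD, Finset.mem_filter, Finset.mem_range] at this; exact this.1
  have hine : x.getD i 0 ≠ y.getD i 0 := by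
    have := hiD; rw [hD, Finset.mem_filter] at this; exact this.2
  have hoff : ∀ k, k ≠ i → x.getD k 0 = y.getD k 0 := by
    intro k hk
    by_contra hkne
    have hkn : k < n := by
      by_contra hkn
      have h1 : x.getD k 0 = 0 := List.getD_eq_default _ _ (by omega)
      have h2 : y.getD k 0 = 0 := List.getD_eq_default _ _ (by omega)
      rw [h1, h2] at hkne; exact hkne rfl
    have hkD : k ∈ D := by rw [hD, Finset.mem_filter, Finset.mem_range]; exact ⟨hkn, hkne⟩
    have hki : k < i := lt_of_le_of_ne (D.le_max' k hkD) hk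
    -- build intermediate w
    set w := x.set i (y.getD i 0) with hwdef
    have hwc : IsCanyon δ w := by
      refine canyon_set_between δ hxc hyc hlen hle (by omega) fun k' hk1 hk2 => ?_
      by_contra hne'
      have : k' ∈ D := by rw [hD, Finset.mem_filter, Finset.mem_range]; exact ⟨by omega, hne'⟩
      have := D.le_max' k' this; omega
    have hwl : w.length = n := by rw [hwdef, List.length_set]; exact hxl
    have hwi : w.getD i 0 = y.getD i 0 := getD_set_self x i _ (by omega)
    have hwk : ∀ k', k' ≠ i → w.getD k' 0 = x.getD k' 0 := fun k' h' => getD_set_ne x _ _ k' h'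
    apply hno
    refine ⟨w, ⟨hwc, hwl⟩, ⟨?_, ?_⟩, ⟨?_, ?_⟩⟩
    · rw [wle_iff_getD (by omega)]
      intro k' hk'
      by_cases h' : k' = i
      · subst h'; rw [hwi]; exact hle _ hk'
      · rw [hwk k' h']
    · exact ne_of_getD_ne (k := i) (by rw [hwi]; exact hine)
    · rw [wle_iff_getD (by omega)]
      intro k' hk'
      by_cases h' : k' = i
      · subst h'; rw [hwi]
      · rw [hwk k' h']; exact hle _ (by omega)
    · exact ne_of_getD_ne (k := k) (by rw [hwk k hk]; exact hkne)
  exact ⟨i, hin, lt_of_le_of_ne (hle i (by omega)) hine, hoff⟩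

lemma cover_iff_single (δ : ℕ → ℕ) (n : ℕ) {x y : List ℕ}
    (hx : IsCanyon δ x) (hy : IsCanyon δ y) (hxl : x.length = n) (hyl : y.length = n)
    {i : ℕ} (hi : i < n) (hlt : x.getD i 0 < y.getD i 0)
    (hoff : ∀ k, k ≠ i → x.getD k 0 = y.getD k 0) :
    CoversIn {w | IsCanyon δ w ∧ w.length = n} x y ↔
      ∀ b, x.getD i 0 < b → b < y.getD i 0 → ¬ IsCanyon δ (y.set i b) := by
  constructor
  · rintro ⟨-, -, -, hno⟩ b hb1 hb2 hbc
    set w := y.set i b with hwdef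
    have hwl : w.length = n := by rw [hwdef, List.length_set]; exact hyl
    have hwi : w.getD i 0 = b := getD_set_self y i b (by omega)
    have hwk : ∀ k, k ≠ i → w.getD k 0 = y.getD k 0 := fun k h => getD_set_ne y _ _ k h
    apply hno
    refine ⟨w, ⟨hbc, hwl⟩, ⟨?_, ?_⟩, ⟨?_, ?_⟩⟩
    · rw [wle_iff_getD (by omega)]
      intro k hk
      by_cases h : k = i
      · subst h; rw [hwi]; omega
      · rw [hwk k h]; exact le_of_eq (hoff k h)
    · exact ne_of_getD_ne (k := i) (by rw [hwi]; omega)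
    · rw [wle_iff_getD (by omega)]
      intro k hk
      by_cases h : k = i
      · subst h; rw [hwi]; omega
      · rw [hwk k h]
    · exact ne_of_getD_ne (k := i) (by rw [hwi]; omega)
  · intro H
    refine ⟨⟨hx, hxl⟩, ⟨hy, hyl⟩, ⟨?_, ?_⟩, ?_⟩
    · rw [wle_iff_getD (by omega)]
      intro k hk
      by_cases h : k = i
      · subst h; omega
      · exact le_of_eq (hoff k h)
    · exact ne_of_getD_ne (k := i) (by omega)
    · rintro ⟨w, ⟨hwc, hwl⟩, ⟨hxw, hxwne⟩, ⟨hwy, hwyne⟩⟩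
      have h1 : ∀ k < n, x.getD k 0 ≤ w.getD k 0 := by
        have := (wle_iff_getD (u := x) (v := w) (by omega)).mp hxw
        intro k hk; exact this k (by omega)
      have h2 : ∀ k < n, w.getD k 0 ≤ y.getD k 0 := by
        have := (wle_iff_getD (u := w) (v := y) (by omega)).mp hwy
        intro k hk; exact this k (by omega)
      have hweq : ∀ k, k ≠ i → w.getD k 0 = y.getD k 0 := by
        intro k hk
        by_cases hkn : k < n
        · have := hoff k hk; have := h1 k hkn; have := h2 k hkn; omega
        · rw [List.getD_eq_default _ _ (by omega), List.getD_eq_default _ _ (by omega)]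
      have hwine : w.getD i 0 ≠ x.getD i 0 := by
        intro he
        apply hxwne
        refine (list_ext_getD (by omega) fun k hk => ?_).symm
        by_cases h : k = i
        · subst h; exact he
        · rw [hweq k h, hoff k h]
      have hwiny : w.getD i 0 ≠ y.getD i 0 := by
        intro he
        apply hwyne
        refine list_ext_getD (by omega) fun k hk => ?_
        by_cases h : k = i
        · subst h; exact he
        · exact hweq k h
      have hwi1 : x.getD i 0 < w.getD i 0 := lt_of_le_of_ne (h1 i hi) (Ne.symm hwine)
      have hwi2 : w.getD i 0 < y.getD i 0 := lt_of_le_of_ne (h2 i hi) hwiny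
      have hweq2 : w = y.set i (w.getD i 0) := by
        refine list_ext_getD (by rw [List.length_set]; omega) fun k hk => ?_
        by_cases h : k = i
        · subst h; rw [getD_set_self y _ _ (by omega)]
        · rw [getD_set_ne y _ _ k h]; exact hweq k h
      exact H (w.getD i 0) hwi1 hwi2 (hweq2 ▸ hwc)

noncomputable def dmB (δ : ℕ → ℕ) (u : List ℕ) (i : ℕ) : Set ℕ :=
  {b | b < u.getD i 0 ∧ IsCanyon δ (u.set i b)}

noncomputable def umB (δ : ℕ → ℕ) (u : List ℕ) (i : ℕ) : Set ℕ :=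
  {b | u.getD i 0 < b ∧ IsCanyon δ (u.set i b)}

lemma down_covers_eq (δ : ℕ → ℕ) (n : ℕ) {u : List ℕ}
    (hu : IsCanyon δ u) (hlen : u.length = n) :
    {v | CoversIn {w | IsCanyon δ w ∧ w.length = n} v u}
      = (fun i => u.set i (sSup (dmB δ u i))) '' {i | i < n ∧ 1 ≤ u.getD i 0} := by
  have hdm : ∀ i, i < n → 1 ≤ u.getD i 0 →
      sSup (dmB δ u i) ∈ dmB δ u i ∧ ∀ b ∈ dmB δ u i, b ≤ sSup (dmB δ u i) := by
    intro i hin hi1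
    have hne : (dmB δ u i).Nonempty := ⟨0, by omega, canyon_set_zero δ hu i⟩
    have hbd : BddAbove (dmB δ u i) := ⟨u.getD i 0, fun b hb => le_of_lt hb.1⟩
    exact ⟨Nat.sSup_mem hne hbd, fun b hb => le_csSup hbd hb⟩
  ext v
  simp only [Set.mem_setOf_eq, Set.mem_image]
  constructor
  · intro hcov
    obtain ⟨i, hin, hlt, hoff⟩ := covers_single_diff δ n hcov
    have hvc := hcov.1.1
    have hvl := hcov.1.2
    have hveq : v = u.set i (v.getD i 0) := by
      refine list_ext_getD (by rw [List.length_set]; omega) fun k hk => ?_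
      by_cases h : k = i
      · subst h; rw [getD_set_self u _ _ (by omega)]
      · rw [getD_set_ne u _ _ k h]; exact hoff k h
    have hu1 : 1 ≤ u.getD i 0 := by omega
    obtain ⟨hmem, hub⟩ := hdm i hin hu1
    have hvB : v.getD i 0 ∈ dmB δ u i := ⟨hlt, hveq ▸ hvc⟩
    have hle : v.getD i 0 ≤ sSup (dmB δ u i) := hub _ hvB
    rcases eq_or_lt_of_le hle with he | hlt2
    · exact ⟨i, ⟨hin, hu1⟩, by rw [← he, ← hveq]⟩
    · exfalso
      have := (cover_iff_single δ n hvc hu hvl hlen hin hlt hoff).mp hcov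
      exact this (sSup (dmB δ u i)) hlt2 hmem.1 hmem.2
  · rintro ⟨i, ⟨hin, hi1⟩, rfl⟩
    obtain ⟨hmem, hub⟩ := hdm i hin hi1
    set b := sSup (dmB δ u i) with hb
    have hxl : (u.set i b).length = n := by rw [List.length_set]; omega
    have hxi : (u.set i b).getD i 0 = b := getD_set_self u i b (by omega)
    have hoff : ∀ k, k ≠ i → (u.set i b).getD k 0 = u.getD k 0 :=
      fun k h => getD_set_ne u _ _ k h
    have hblt := hmem.1
    rw [cover_iff_single δ n hmem.2 hu hxl hlen hin (by omega) hoff]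
    intro c hc1 hc2 hcc
    have : c ∈ dmB δ u i := ⟨hc2, hcc⟩
    have := hub c this
    omega

lemma up_covers_eq (δ : ℕ → ℕ) (n : ℕ) {u : List ℕ}
    (hu : IsCanyon δ u) (hlen : u.length = n) :
    {v | CoversIn {w | IsCanyon δ w ∧ w.length = n} u v}
      = (fun i => u.set i (sInf (umB δ u i))) '' {i | i < n ∧ (umB δ u i).Nonempty} := by
  ext v
  simp only [Set.mem_setOf_eq, Set.mem_image]
  constructor
  · intro hcov
    obtain ⟨i, hin, hlt, hoff⟩ := covers_single_diff δ n hcov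
    have hvc := hcov.2.1.1
    have hvl := hcov.2.1.2
    have hveq : v = u.set i (v.getD i 0) := by
      refine (list_ext_getD (by rw [List.length_set]; omega) fun k hk => ?_).symm
      by_cases h : k = i
      · subst h; rw [getD_set_self u _ _ (by omega)]
      · rw [getD_set_ne u _ _ k h]; exact hoff k h
    have hvB : v.getD i 0 ∈ umB δ u i := ⟨hlt, hveq ▸ hvc⟩
    have hne : (umB δ u i).Nonempty := ⟨_, hvB⟩
    have hmem : sInf (umB δ u i) ∈ umB δ u i := Nat.sInf_mem hne
    have hle : sInf (umB δ u i) ≤ v.getD i 0 := Nat.sInf_le hvB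
    rcases eq_or_lt_of_le hle with he | hlt2
    · exact ⟨i, ⟨hin, hne⟩, by rw [he, ← hveq]⟩
    · exfalso
      have := (cover_iff_single δ n hu hvc hlen hvl hin hlt hoff).mp hcov
      refine this (sInf (umB δ u i)) hmem.1 hlt2 ?_
      have : v.set i (sInf (umB δ u i)) = u.set i (sInf (umB δ u i)) := by
        refine list_ext_getD (by rw [List.length_set, List.length_set]; omega) fun k hk => ?_
        by_cases h : k = i
        · subst h
          rw [getD_set_self v _ _ (by rw [List.length_set] at hk; omega),
            getD_set_self u _ _ (by omega)]
        · rw [getD_set_ne v _ _ k h, getD_set_ne u _ _ k h]; exact (hoff k h).symm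
      rw [this]; exact hmem.2
  · rintro ⟨i, ⟨hin, hne⟩, rfl⟩
    have hmem : sInf (umB δ u i) ∈ umB δ u i := Nat.sInf_mem hne
    set b := sInf (umB δ u i) with hb
    have hxl : (u.set i b).length = n := by rw [List.length_set]; omega
    have hxi : (u.set i b).getD i 0 = b := getD_set_self u i b (by omega)
    have hoff : ∀ k, k ≠ i → u.getD k 0 = (u.set i b).getD k 0 :=
      fun k h => (getD_set_ne u _ _ k h).symm
    have hlt : u.getD i 0 < (u.set i b).getD i 0 := by rw [hxi]; exact hmem.1
    rw [cover_iff_single δ n hu hmem.2 hlen hxl hin hlt hoff]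
    intro c hc1 hc2 hcc
    rw [hxi] at hc2
    have hcc2 : IsCanyon δ (u.set i c) := by
      have : (u.set i b).set i c = u.set i c := by
        refine list_ext_getD (by rw [List.length_set, List.length_set, List.length_set]) fun k hk => ?_
        by_cases h : k = i
        · subst h
          rw [List.length_set, List.length_set] at hk
          rw [getD_set_self _ _ _ (by rw [List.length_set]; omega), getD_set_self u _ _ (by omega)]
        · rw [getD_set_ne _ _ _ k h, getD_set_ne u _ _ k h, getD_set_ne u _ _ k h]
      rwa [this] at hcc
    have : c ∈ umB δ u i := ⟨hc1, hcc2⟩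
    have := Nat.sInf_le this
    omega

open Classical in
lemma down_count (δ : ℕ → ℕ) (n : ℕ) {u : List ℕ}
    (hu : IsCanyon δ u) (hlen : u.length = n) :
    Set.ncard {v | CoversIn {w | IsCanyon δ w ∧ w.length = n} v u}
      = ((Finset.range n).filter (fun i => 1 ≤ u.getD i 0)).card := by
  rw [down_covers_eq δ n hu hlen]
  have hset : {i | i < n ∧ 1 ≤ u.getD i 0}
      = ↑((Finset.range n).filter (fun i => 1 ≤ u.getD i 0)) := by
    ext k; simp [Finset.mem_filter, Finset.mem_range]
  rw [hset, Set.ncard_image_of_injOn, Set.ncard_coe_finset]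
  intro i hi j hj hij
  simp only [Finset.coe_filter, Finset.mem_range, Set.mem_setOf_eq] at hi hj
  simp only [] at hij
  by_contra hne
  have hmi : sSup (dmB δ u i) ∈ dmB δ u i :=
    Nat.sSup_mem ⟨0, by omega, canyon_set_zero δ hu i⟩ ⟨u.getD i 0, fun b hb => le_of_lt hb.1⟩
  have h1 : (u.set i (sSup (dmB δ u i))).getD i 0 = sSup (dmB δ u i) :=
    getD_set_self u _ _ (by omega)
  have h2 : (u.set j (sSup (dmB δ u j))).getD i 0 = u.getD i 0 :=
    getD_set_ne u _ _ i hne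
  have := hmi.1
  rw [hij, h2] at h1
  omega

open Classical in
lemma up_count (δ : ℕ → ℕ) (n : ℕ) {u : List ℕ}
    (hu : IsCanyon δ u) (hlen : u.length = n) :
    Set.ncard {v | CoversIn {w | IsCanyon δ w ∧ w.length = n} u v}
      = ((Finset.range n).filter (fun i => (umB δ u i).Nonempty)).card := by
  rw [up_covers_eq δ n hu hlen]
  have hset : {i | i < n ∧ (umB δ u i).Nonempty}
      = ↑((Finset.range n).filter (fun i => (umB δ u i).Nonempty)) := by
    ext k; simp [Finset.mem_filter, Finset.mem_range]
  rw [hset, Set.ncard_image_of_injOn, Set.ncard_coe_finset]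
  intro i hi j hj hij
  simp only [Finset.coe_filter, Finset.mem_range, Set.mem_setOf_eq] at hi hj
  simp only [] at hij
  by_contra hne
  have hmi : sInf (umB δ u i) ∈ umB δ u i := Nat.sInf_mem hi.2
  have h1 : (u.set i (sInf (umB δ u i))).getD i 0 = sInf (umB δ u i) :=
    getD_set_self u _ _ (by omega)
  have h2 : (u.set j (sInf (umB δ u j))).getD i 0 = u.getD i 0 :=
    getD_set_ne u _ _ i hne
  have := hmi.1
  rw [hij, h2] at h1
  omega

lemma card_filter_aux (n : ℕ) (hn : 1 ≤ n) (P : ℕ → Prop) [DecidablePred P] (h0 : ¬ P 0) :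
    ((Finset.range n).filter P).card = n - 1 ↔ ∀ i, 1 ≤ i → i < n → P i := by
  have hsub : (Finset.range n).filter P ⊆ Finset.Ico 1 n := by
    intro k hk
    rw [Finset.mem_filter, Finset.mem_range] at hk
    rw [Finset.mem_Ico]
    rcases Nat.eq_zero_or_pos k with h | h
    · exact absurd (h ▸ hk.2) h0
    · exact ⟨h, hk.1⟩
  have hIco : (Finset.Ico 1 n).card = n - 1 := Nat.card_Ico 1 n
  constructor
  · intro h i h1 h2
    have he : (Finset.range n).filter P = Finset.Ico 1 n :=
      Finset.eq_of_subset_of_card_le hsub (by omega)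
    have : i ∈ (Finset.range n).filter P := by rw [he, Finset.mem_Ico]; exact ⟨h1, h2⟩
    exact (Finset.mem_filter.mp this).2
  · intro H
    have he : (Finset.range n).filter P = Finset.Ico 1 n := by
      refine Finset.Subset.antisymm hsub fun k hk => ?_
      rw [Finset.mem_Ico] at hk
      rw [Finset.mem_filter, Finset.mem_range]
      exact ⟨hk.2, H k hk.1 hk.2⟩
    rw [he, hIco]


/-- Let `m ≥ 1`, `n ≥ 1`, and `u` an `𝐦`-canyon of size `n`.
(a) `u` covers exactly `n - 1` elements of `Ca_𝐦(n)` iff `u` is strictly increasing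
(input-wings). (b) `u` covers exactly `n - 1` elements and is covered by exactly
`n - 1` elements iff `1 ≤ u_i < m(i-1)` for all `i ∈ [2, n]` and
`u_i - u_{i-1} ≥ 2` for all `i ∈ [3, n]` (butterflies).
Here `n - 1 = #{i ∈ [n] : 𝐦(i) ≠ 0}`. -/
theorem stmt14 (m n : ℕ) (hm : 1 ≤ m) (hn : 1 ≤ n) (u : List ℕ)
    (hu : IsCanyon (fun i => m * i) u) (hlen : u.length = n) :
    (Set.ncard {v | CoversIn {w | IsCanyon (fun i => m * i) w ∧ w.length = n} v u} = n - 1 ↔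
      ∀ i, i + 1 < n → u.getD i 0 < u.getD (i + 1) 0) ∧
    ((Set.ncard {v | CoversIn {w | IsCanyon (fun i => m * i) w ∧ w.length = n} v u} = n - 1 ∧
      Set.ncard {v | CoversIn {w | IsCanyon (fun i => m * i) w ∧ w.length = n} u v} = n - 1) ↔
      ((∀ i, 1 ≤ i → i < n → 1 ≤ u.getD i 0 ∧ u.getD i 0 < m * i) ∧
       (∀ i, 2 ≤ i → i < n → u.getD (i - 1) 0 + 2 ≤ u.getD i 0))) := by
  classical
  have hu0 : u.getD 0 0 = 0 := by
    have := hu.1 0 (by omega)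
    simpa using this
  have hd := down_count (fun i => m * i) n hu hlen
  have hup := up_count (fun i => m * i) n hu hlen
  have hAdown : Set.ncard {v | CoversIn {w | IsCanyon (fun i => m * i) w ∧ w.length = n} v u}
      = n - 1 ↔ ∀ i, 1 ≤ i → i < n → 1 ≤ u.getD i 0 := by
    rw [hd]; exact card_filter_aux n hn _ (by omega)
  have hAup : Set.ncard {v | CoversIn {w | IsCanyon (fun i => m * i) w ∧ w.length = n} u v}
      = n - 1 ↔ ∀ i, 1 ≤ i → i < n → (umB (fun i => m * i) u i).Nonempty := by
    rw [hup]
    refine card_filter_aux n hn _ ?_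
    rintro ⟨b, hb1, hb2⟩
    have := hb2.1 0 (by rw [List.length_set]; omega)
    rw [getD_set_self u _ _ (by omega)] at this
    simp at this
    omega
  have hstrict : (∀ i, 1 ≤ i → i < n → 1 ≤ u.getD i 0) ↔
      (∀ i, i + 1 < n → u.getD i 0 < u.getD (i + 1) 0) := by
    constructor
    · intro H i hi
      have h1 : 1 ≤ u.getD (i + 1) 0 := H (i + 1) (by omega) hi
      have h3 := hu.2 (i + 1) (by omega) 1 le_rfl h1 (by omega)
      have he : i + 1 - 1 = i := rfl
      rw [he] at h3
      omega
    · intro H i h1 h2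
      have h3 := H (i - 1) (by omega)
      have he : i - 1 + 1 = i := by omega
      rw [he] at h3
      omega
  refine ⟨hAdown.trans hstrict, ?_⟩
  rw [hAdown, hAup]
  constructor
  · rintro ⟨H1, H2⟩
    constructor
    · intro i h1 h2
      refine ⟨H1 i h1 h2, ?_⟩
      obtain ⟨b, hb1, hb2⟩ := H2 i h1 h2
      have hcl := hb2.1 i (by rw [List.length_set]; omega)
      rw [getD_set_self u _ _ (by omega)] at hcl
      simp only [] at hcl
      omega
    · intro i h2 h3
      by_contra hcon
      obtain ⟨b, hb1, hb2⟩ := H2 (i - 1) (by omega) (by omega)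
      have hwi : (u.set (i - 1) b).getD i 0 = u.getD i 0 := getD_set_ne u _ _ i (by omega)
      have h1i : 1 ≤ u.getD i 0 := H1 i (by omega) h3
      have hc := hb2.2 i (by rw [List.length_set]; omega) 1 le_rfl (by rw [hwi]; omega) (by omega)
      rw [hwi, getD_set_self u _ _ (by omega)] at hc
      omega
  · rintro ⟨B1, B2⟩
    have key1 : ∀ k, 1 ≤ k → k < n → 2 * k ≤ u.getD k 0 + 1 := by
      intro k hk
      induction k, hk using Nat.le_induction with
      | base =>
        intro h
        have := (B1 1 le_rfl h).1
        omega
      | succ k hk ih =>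
        intro h
        have h1 := B2 (k + 1) (by omega) h
        have h2 : k + 1 - 1 = k := by omega
        rw [h2] at h1
        have := ih (by omega)
        omega
    have key2 : ∀ k i, 1 ≤ i → i < k → k < n → u.getD i 0 + (k - i) + 1 ≤ u.getD k 0 := by
      intro k
      induction k with
      | zero => intro i h1 h2 h3; omega
      | succ k ih =>
        intro i h1 h2 h3
        have hB := B2 (k + 1) (by omega) h3
        have h2' : k + 1 - 1 = k := by omega
        rw [h2'] at hB
        rcases eq_or_lt_of_le (Nat.lt_succ_iff.mp h2) with he | hlt
        · subst he; omega
        · have := ih i h1 hlt (by omega); omega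
    constructor
    · intro i h1 h2; exact (B1 i h1 h2).1
    · intro i h1 h2
      refine ⟨u.getD i 0 + 1, by omega, ?_, ?_⟩
      · intro k hk
        rw [List.length_set] at hk
        by_cases h : k = i
        · subst h
          rw [getD_set_self u _ _ (by omega)]
          have := (B1 k h1 h2).2
          simp only []
          omega
        · rw [getD_set_ne u _ _ k h]; exact hu.1 k (by omega)
      · intro k hk j hj1 hj2 hj3
        rw [List.length_set] at hk
        by_cases h : k = i
        · subst h
          rw [getD_set_self u _ _ (by omega)] at hj2 ⊢
          have hk1 := key1 k h1 h2
          have hjk : j ≤ u.getD k 0 := by omega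
          have := hu.2 k (by omega) j hj1 hjk hj3
          rw [getD_set_ne u _ _ (k - j) (by omega)]
          omega
        · rw [getD_set_ne u _ _ k h] at hj2 ⊢
          have := hu.2 k (by omega) j hj1 hj2 hj3
          by_cases h3 : k - j = i
          · rw [h3, getD_set_self u _ _ (by omega)]
            have := key2 k i h1 (by omega) (by omega)
            omega
          · rw [getD_set_ne u _ _ _ h3]; omega
end
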